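/- Let $(X,Y)$ be jointly Gaussian with mean zero, unit variances, and correlation $\rho \in [-1,1]$. Then for any $t \geq 0$, $\Pr(\max(0,X)\cdot\max(0,Y) > t) \leq \exp(-t/(1+\rho))$. -/

import Mathlib

/-! A Chernoff bound on `X + Y`. On the event, `X, Y > 0` and `XY > t`, so by AM-GM
`X + Y ≥ 2 √(XY) ≥ 2 √t`; and `X + Y = (1 + ρ) Z₁ + √(1 - ρ²) Z₂` is a centered Gaussian of
variance `(1 + ρ)² + (1 - ρ²) = 2 (1 + ρ)`, whose tail at `2 √t` is at most
`exp (-(2 √t)² / (2 · 2 (1 + ρ))) = exp (-t / (1 + ρ))`. -/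

open MeasureTheory ProbabilityTheory

/-- The law of a centered bivariate Gaussian with unit variances and correlation `ρ`,
realized as the pushforward of a pair of independent standard Gaussians under
`(z₁, z₂) ↦ (z₁, ρ z₁ + √(1-ρ²) z₂)`. -/
noncomputable def jointGaussian (ρ : ℝ) : Measure (ℝ × ℝ) :=
  ((gaussianReal 0 1).prod (gaussianReal 0 1)).map
    (fun p => (p.1, ρ * p.1 + Real.sqrt (1 - ρ ^ 2) * p.2))

open Real NNReal

lemma hasSubgaussianMGF_id_gaussianReal (v : ℝ≥0) : HasSubgaussianMGF id v (gaussianReal 0 v) where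
  integrable_exp_mul := integrable_exp_mul_gaussianReal
  mgf_le t := by simp [mgf_id_gaussianReal]

lemma gaussianReal_Ici_le (v : ℝ≥0) {a : ℝ} (ha : 0 ≤ a) :
    gaussianReal 0 v (Set.Ici a) ≤ ENNReal.ofReal (exp (-a ^ 2 / (2 * v))) := by
  rw [← ofReal_measureReal]
  exact ENNReal.ofReal_le_ofReal ((hasSubgaussianMGF_id_gaussianReal v).measure_ge_le ha)

lemma gaussianReal_prod_map_mul_add_mul (m₁ m₂ : ℝ) (v₁ v₂ : ℝ≥0) (a b : ℝ) :
    ((gaussianReal m₁ v₁).prod (gaussianReal m₂ v₂)).map (fun p => a * p.1 + b * p.2) =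
      gaussianReal (a * m₁ + b * m₂)
        (.mk (a ^ 2) (sq_nonneg a) * v₁ + .mk (b ^ 2) (sq_nonneg b) * v₂) := by
  refine gaussianReal_add_gaussianReal_of_indepFun
    (indepFun_prod (measurable_const_mul a) (measurable_const_mul b)) ?_ ?_
  · rw [show (fun p : ℝ × ℝ => a * p.1) = (a * ·) ∘ Prod.fst from rfl,
      ← Measure.map_map (measurable_const_mul a) measurable_fst, Measure.map_fst_prod,
      measure_univ, one_smul, gaussianReal_map_const_mul]
  · rw [show (fun p : ℝ × ℝ => b * p.2) = (b * ·) ∘ Prod.snd from rfl,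
      ← Measure.map_map (measurable_const_mul b) measurable_snd, Measure.map_snd_prod,
      measure_univ, one_smul, gaussianReal_map_const_mul]

instance (ρ : ℝ) : IsProbabilityMeasure (jointGaussian ρ) :=
  Measure.isProbabilityMeasure_map (by fun_prop)

lemma jointGaussian_map_add {ρ : ℝ} (hρ : ρ ∈ Set.Icc (-1 : ℝ) 1) :
    (jointGaussian ρ).map (fun p => p.1 + p.2) = gaussianReal 0 (2 * (1 + ρ)).toNNReal := by
  rw [jointGaussian, Measure.map_map (by fun_prop) (by fun_prop)]
  convert gaussianReal_prod_map_mul_add_mul 0 0 1 1 (1 + ρ) √(1 - ρ ^ 2) using 2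
  · ext p
    simp only [Function.comp_apply]
    ring
  · simp
  · have : 0 ≤ 1 - ρ ^ 2 := by nlinarith [hρ.1, hρ.2]
    ext
    simp only [Real.coe_toNNReal _ (by linarith [hρ.1] : 0 ≤ 2 * (1 + ρ)), NNReal.coe_add,
      mul_one, coe_mk, sq_sqrt this]
    ring

lemma two_mul_sqrt_le_add_of_lt_max_mul_max {t x y : ℝ} (ht : 0 ≤ t)
    (h : t < max 0 x * max 0 y) : 2 * √t ≤ x + y := by
  have hx : 0 < x := by
    by_contra! hx
    rw [max_eq_left hx, zero_mul] at h
    linarith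
  have hy : 0 < y := by
    by_contra! hy
    rw [max_eq_left hy, mul_zero] at h
    linarith
  rw [max_eq_right hx.le, max_eq_right hy.le] at h
  nlinarith [sq_sqrt ht, sqrt_nonneg t, sq_nonneg (x - y)]

theorem relu_product_tail_bound_general (ρ : ℝ) (hρ : ρ ∈ Set.Icc (-1 : ℝ) 1)
    (t : ℝ) :
    jointGaussian ρ {p : ℝ × ℝ | t < max 0 p.1 * max 0 p.2} ≤
      ENNReal.ofReal (Real.exp (-t / (1 + ρ))) := by
  rcases le_or_gt 0 (-t / (1 + ρ)) with hexp | hexp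
  · calc _ ≤ 1 := prob_le_one
      _ ≤ _ := by simpa using one_le_exp hexp
  have hρ₀ : 0 < 1 + ρ := by
    refine lt_of_le_of_ne (by linarith [hρ.1]) fun h => ?_
    simp [← h] at hexp
  have ht : 0 < t := by
    by_contra! ht
    exact hexp.not_ge (div_nonneg (by linarith) hρ₀.le)
  calc jointGaussian ρ {p : ℝ × ℝ | t < max 0 p.1 * max 0 p.2}
      ≤ jointGaussian ρ {p | 2 * √t ≤ p.1 + p.2} :=
        measure_mono fun p hp => two_mul_sqrt_le_add_of_lt_max_mul_max ht.le hp
    _ = (jointGaussian ρ).map (fun p => p.1 + p.2) (Set.Ici (2 * √t)) :=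
        (Measure.map_apply (measurable_fst.add measurable_snd) measurableSet_Ici).symm
    _ = gaussianReal 0 (2 * (1 + ρ)).toNNReal (Set.Ici (2 * √t)) := by
        rw [jointGaussian_map_add hρ]
    _ ≤ ENNReal.ofReal (exp (-(2 * √t) ^ 2 / (2 * (2 * (1 + ρ)).toNNReal))) :=
        gaussianReal_Ici_le _ (by positivity)
    _ = ENNReal.ofReal (exp (-t / (1 + ρ))) := by
        rw [Real.coe_toNNReal _ (by positivity), mul_pow, sq_sqrt ht.le]
        congr 2
        field_simp

/-- For `(X,Y) ~ N(0, Σ_ρ)` and `t ≥ 0`,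
`Pr(max(0,X) ⬝ max(0,Y) > t) ≤ exp(-t/(1+ρ))`. -/
theorem relu_product_tail_bound (ρ : ℝ) (hρ : ρ ∈ Set.Icc (-1 : ℝ) 1)
    (t : ℝ) (ht : 0 ≤ t) :
    jointGaussian ρ {p : ℝ × ℝ | t < max 0 p.1 * max 0 p.2} ≤
      ENNReal.ofReal (Real.exp (-t / (1 + ρ))) :=
  relu_product_tail_bound_general ρ hρ t
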